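/- arXiv:0812.1078 — 2 statements merged into one kernel-verified Lean document; each statement's English description precedes it below -/
import Mathlib

section
/- Let g be a finite-dimensional complex semisimple Lie algebra equipped with a ℤ-gradation g = ⊕_{i ∈ ℤ} g_i admitting a grading element c. If X ∈ g_1 and there exists Y ∈ g_{-1} such that ⁅X, Y⁆ = c, then ⁅g_0, X⁆ = g_1, i.e. every element of g_1 is of the form ⁅Z, X⁆ for some Z ∈ g_0. -/
/-! For `p` of `ad c`-weight `n > 0` with `⁅X, ⁅Y, p⁆⁆ = 0`, the vectors `wⱼ = (ad X)ʲ p` satisfy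
`⁅Y, wⱼ₊₁⁆ = -(∑ i ≤ j, (n + i)) • wⱼ`, so none of them vanishes unless `p = 0`. They are
eigenvectors of `ad c` with the distinct eigenvalues `n + j`, and in finite dimension only finitely
many of them can be nonzero. Hence `ad X ∘ ad Y` is injective, so bijective, on the weight space
of `n`; for `n = 1` this is `g 1 = ⁅X, ⁅Y, g 1⁆⁆ ⊆ ⁅X, g 0⁆`. -/

open LieModule

section

variable {K L M : Type*} [Field K] [LieRing L] [LieAlgebra K L]
  [AddCommGroup M] [Module K M] [LieRingModule L M] [LieModule K L M]
  {x y h : L}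

lemma lie_lie_eq_add_smul_of_lie_eq_smul {a b : K} {m : M}
    (hx : ⁅h, x⁆ = a • x) (hm : ⁅h, m⁆ = b • m) :
    ⁅h, ⁅x, m⁆⁆ = (a + b) • ⁅x, m⁆ := by
  rw [leibniz_lie, hx, hm, smul_lie, lie_smul, add_smul]

lemma lie_pow_toEnd_apply_of_lie_eq_self (hx : ⁅h, x⁆ = x) {μ : K} {m : M}
    (hm : ⁅h, m⁆ = μ • m) (j : ℕ) :
    ⁅h, (toEnd K L M x ^ j) m⁆ = (μ + j) • (toEnd K L M x ^ j) m := by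
  induction j with
  | zero => simpa using hm
  | succ j ih =>
    rw [pow_succ', Module.End.mul_apply, toEnd_apply_apply,
      lie_lie_eq_add_smul_of_lie_eq_smul (a := 1) (by rw [hx, one_smul]) ih]
    push_cast
    congr 1
    ring

lemma exists_pow_toEnd_apply_eq_zero [CharZero K] [Module.Finite K M] (hx : ⁅h, x⁆ = x)
    {μ : K} {m : M} (hm : ⁅h, m⁆ = μ • m) :
    ∃ j : ℕ, (toEnd K L M x ^ j) m = 0 := by
  by_contra! hne
  have heigen : Set.range (fun j : ℕ ↦ μ + j) ⊆ {ν | (toEnd K L M h).HasEigenvalue ν} := by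
    rintro _ ⟨j, rfl⟩
    exact Module.End.hasEigenvalue_of_hasEigenvector <| Module.End.hasEigenvector_iff.mpr
      ⟨Module.End.mem_eigenspace_iff.mpr (lie_pow_toEnd_apply_of_lie_eq_self hx hm j), hne j⟩
  exact Set.infinite_range_of_injective (fun i j hij ↦ by simpa using hij)
    ((Module.End.finite_hasEigenvalue _).subset heigen)

lemma lie_pow_succ_toEnd_apply_of_lie_lie_eq_zero (hxy : ⁅x, y⁆ = h) (hx : ⁅h, x⁆ = x)
    {μ : K} {m : M} (hm : ⁅h, m⁆ = μ • m) (hxym : ⁅x, ⁅y, m⁆⁆ = 0) (j : ℕ) :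
    ⁅y, (toEnd K L M x ^ (j + 1)) m⁆ =
      -(∑ i ∈ Finset.range (j + 1), (μ + i)) • (toEnd K L M x ^ j) m := by
  have hyx : ∀ v : M, ⁅y, ⁅x, v⁆⁆ = -⁅h, v⁆ + ⁅x, ⁅y, v⁆⁆ := fun v ↦ by
    rw [leibniz_lie, ← lie_skew, hxy, neg_lie]
  induction j with
  | zero =>
    simp only [zero_add, pow_one, toEnd_apply_apply, hyx, hm, hxym, pow_zero,
      Module.End.one_apply, Finset.sum_range_one]
    module
  | succ j ih =>
    rw [pow_succ', Module.End.mul_apply, toEnd_apply_apply, hyx, ih, lie_smul,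
      lie_pow_toEnd_apply_of_lie_eq_self hx hm, ← toEnd_apply_apply K, ← Module.End.mul_apply,
      ← pow_succ', Finset.sum_range_succ _ (j + 1)]
    push_cast
    module

lemma eq_zero_of_lie_lie_eq_zero [CharZero K] [Module.Finite K M] (hxy : ⁅x, y⁆ = h)
    (hx : ⁅h, x⁆ = x) {n : ℕ} (hn : n ≠ 0) {m : M} (hm : ⁅h, m⁆ = (n : K) • m)
    (hxym : ⁅x, ⁅y, m⁆⁆ = 0) : m = 0 := by
  by_contra hm0
  obtain ⟨k, hk⟩ := exists_pow_toEnd_apply_eq_zero hx hm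
  suffices ∀ j : ℕ, (toEnd K L M x ^ j) m ≠ 0 from this k hk
  intro j
  induction j with
  | zero => simpa using hm0
  | succ j ih =>
    intro hj
    have hcoeff : (∑ i ∈ Finset.range (j + 1), ((n : K) + i)) ≠ 0 := by
      exact_mod_cast (Finset.sum_pos (fun i _ ↦ by positivity) Finset.nonempty_range_add_one).ne'
    have := lie_pow_succ_toEnd_apply_of_lie_lie_eq_zero hxy hx hm hxym j
    rw [hj, lie_zero, eq_comm, smul_eq_zero, neg_eq_zero] at this
    exact ih (this.resolve_left hcoeff)

lemma exists_lie_lie_eq_of_lie_eq_natCast_smul [CharZero K] [Module.Finite K M] (hxy : ⁅x, y⁆ = h)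
    (hx : ⁅h, x⁆ = x) (hy : ⁅h, y⁆ = -y) {n : ℕ} (hn : n ≠ 0) {w : M}
    (hw : ⁅h, w⁆ = (n : K) • w) :
    ∃ u : M, ⁅h, u⁆ = (n : K) • u ∧ ⁅x, ⁅y, u⁆⁆ = w := by
  let E := Module.End.eigenspace (toEnd K L M h) n
  have hmaps : ∀ u ∈ E, (toEnd K L M x * toEnd K L M y) u ∈ E := fun u hu ↦ by
    rw [Module.End.mem_eigenspace_iff, toEnd_apply_apply] at hu ⊢
    rw [Module.End.mul_apply, toEnd_apply_apply, toEnd_apply_apply,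
      lie_lie_eq_add_smul_of_lie_eq_smul (a := 1) (by rw [hx, one_smul])
        (lie_lie_eq_add_smul_of_lie_eq_smul (a := -1) (by rw [hy, neg_one_smul]) hu)]
    congr 1
    ring
  let T : E →ₗ[K] E := (toEnd K L M x * toEnd K L M y).restrict hmaps
  have hT : Function.Injective T := by
    rw [← LinearMap.ker_eq_bot, LinearMap.ker_eq_bot']
    intro u hu
    exact Subtype.ext <| eq_zero_of_lie_lie_eq_zero hxy hx hn
      (Module.End.mem_eigenspace_iff.mp u.2) (congrArg Subtype.val hu)
  obtain ⟨u, hu⟩ :=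
    LinearMap.injective_iff_surjective.mp hT ⟨w, Module.End.mem_eigenspace_iff.mpr hw⟩
  exact ⟨u, Module.End.mem_eigenspace_iff.mp u.2, congrArg Subtype.val hu⟩

end

theorem bracket_gradeZero_eq_gradeOne_of_sl2_general
    {L : Type*} [LieRing L] [LieAlgebra ℂ L] [Module.Finite ℂ L]
    (g : ℤ → Submodule ℂ L)
    (c : L)
    (hc : ∀ i : ℤ, ∀ X : L, X ∈ g i ↔ ⁅c, X⁆ = (i : ℂ) • X)
    (X : L) (hX : X ∈ g 1)
    (Y : L) (hY : Y ∈ g (-1)) (hXY : ⁅X, Y⁆ = c) :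
    ∀ W ∈ g 1, ∃ Z ∈ g 0, ⁅Z, X⁆ = W := by
  have hcX : ⁅c, X⁆ = X := by simpa using (hc 1 X).mp hX
  have hcY : ⁅c, Y⁆ = -Y := by simpa using (hc (-1) Y).mp hY
  intro W hW
  obtain ⟨u, hcu, hu⟩ := exists_lie_lie_eq_of_lie_eq_natCast_smul (K := ℂ) (M := L)
    hXY hcX hcY one_ne_zero (by simpa using (hc 1 W).mp hW)
  refine ⟨⁅u, Y⁆, (hc 0 _).mpr ?_, ?_⟩
  · rw [lie_lie_eq_add_smul_of_lie_eq_smul (a := (1 : ℂ)) (b := -1) (by simpa using hcu)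
      (by rw [hcY, neg_one_smul]), add_neg_cancel, Int.cast_zero]
  · rw [← lie_skew, ← lie_skew u, lie_neg, neg_neg, hu]

/-- Let `g` be a finite-dimensional complex semisimple Lie algebra with a
ℤ-gradation `g = ⊕_{i ∈ ℤ} g_i` admitting a grading element `c`. If `X ∈ g_1` and there is
`Y ∈ g_{-1}` with `⁅X, Y⁆ = c`, then `⁅g_0, X⁆ = g_1`: every element of `g_1` has the form
`⁅Z, X⁆` with `Z ∈ g_0`. -/
theorem bracket_gradeZero_eq_gradeOne_of_sl2
    {L : Type*} [LieRing L] [LieAlgebra ℂ L] [Module.Finite ℂ L]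
    [LieAlgebra.IsSemisimple ℂ L]
    (g : ℤ → Submodule ℂ L)
    (hdecomp : DirectSum.IsInternal g)
    (hbracket : ∀ i j : ℤ, ∀ x ∈ g i, ∀ y ∈ g j, ⁅x, y⁆ ∈ g (i + j))
    (c : L)
    (hc : ∀ i : ℤ, ∀ X : L, X ∈ g i ↔ ⁅c, X⁆ = (i : ℂ) • X)
    (X : L) (hX : X ∈ g 1)
    (Y : L) (hY : Y ∈ g (-1)) (hXY : ⁅X, Y⁆ = c) :
    ∀ W ∈ g 1, ∃ Z ∈ g 0, ⁅Z, X⁆ = W :=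
  bracket_gradeZero_eq_gradeOne_of_sl2_general g c hc X hX Y hY hXY
end

section
/- Let m ≥ 1 and let f(λ, μ) = Σ_{k=0}^{m} c_k λ^k μ^{m-k} be a nonzero homogeneous polynomial of degree m with complex coefficients. Then there exist 2-vectors ω₁, ω₂ ∈ ⋀²(ℂ^{2m}) such that for all λ, μ ∈ ℂ, the m-th exterior power (λω₁ + μω₂)^{∧m} equals f(λ, μ) · (e₁ ∧ e₂ ∧ ⋯ ∧ e_{2m}) in ⋀^{2m}(ℂ^{2m}), where e₁, …, e_{2m} is the standard basis of ℂ^{2m}. -/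
/-!
Over ℂ the binary form splits into linear factors; factoring `f / m!` gives
`f(λ, μ) = m! ∏ᵢ (aᵢ λ + bᵢ μ)`. The 2-vectors `βᵢ = e₂ᵢ₋₁ ∧ e₂ᵢ` commute and square to zero,
and for `m` such elements `(∑ tᵢ βᵢ)^m = m! ∏ tᵢ · β₁ ⋯ βₘ`, where `β₁ ⋯ βₘ = e₁ ∧ ⋯ ∧ e₂ₘ`.
So `ω₁ = ∑ aᵢ βᵢ` and `ω₂ = ∑ bᵢ βᵢ` work, with `tᵢ = aᵢ λ + bᵢ μ`.
-/

open scoped Nat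

section Nilpotent

variable {A : Type*} [Semiring A]

theorem Commute.add_pow_succ_of_mul_self_eq_zero {a y : A} (h : Commute y a) (hy : y * y = 0)
    (k : ℕ) : (y + a) ^ (k + 1) = a ^ (k + 1) + (k + 1) • (y * a ^ k) := by
  induction k with
  | zero => simp [add_comm]
  | succ k ih =>
    have hya : y * a ^ k * y = 0 := by
      rw [mul_assoc, ← (h.pow_right k).eq, ← mul_assoc, hy, zero_mul]
    rw [pow_succ, ih, add_mul, mul_add, mul_add, ← (h.pow_right _).eq, smul_mul_assoc,
      smul_mul_assoc, hya, smul_zero, zero_add, mul_assoc, ← pow_succ, ← pow_succ,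
      succ_nsmul _ (k + 1)]
    abel

variable {n : ℕ} {x : Fin n → A}

theorem sum_pow_succ_eq_zero_of_mul_self_eq_zero (hcomm : ∀ i j, Commute (x i) (x j))
    (hsq : ∀ i, x i * x i = 0) : (∑ i, x i) ^ (n + 1) = 0 := by
  induction n with
  | zero => simp
  | succ n ih =>
    have hc : Commute (x 0) (∑ i : Fin n, x i.succ) := .sum_right _ _ _ fun i _ => hcomm _ _
    rw [Fin.sum_univ_succ, hc.add_pow_succ_of_mul_self_eq_zero (hsq 0),
      pow_succ, ih (fun i j => hcomm _ _) (fun i => hsq _), zero_mul, mul_zero, smul_zero,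
      add_zero]

theorem sum_pow_eq_factorial_smul_prod_of_mul_self_eq_zero (hcomm : ∀ i j, Commute (x i) (x j))
    (hsq : ∀ i, x i * x i = 0) : (∑ i, x i) ^ n = n ! • (List.ofFn x).prod := by
  induction n with
  | zero => simp
  | succ n ih =>
    have hc : Commute (x 0) (∑ i : Fin n, x i.succ) := .sum_right _ _ _ fun i _ => hcomm _ _
    rw [Fin.sum_univ_succ, hc.add_pow_succ_of_mul_self_eq_zero (hsq 0),
      sum_pow_succ_eq_zero_of_mul_self_eq_zero (fun i j => hcomm _ _) (fun i => hsq _),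
      ih (fun i j => hcomm _ _) (fun i => hsq _), zero_add, mul_smul_comm, smul_smul,
      List.ofFn_succ, List.prod_cons, Nat.factorial_succ]

end Nilpotent

theorem List.prod_ofFn_smul {R A : Type*} [CommMonoid R] [Monoid A] [MulAction R A]
    [IsScalarTower R A A] [SMulCommClass R A A] {n : ℕ} (t : Fin n → R) (y : Fin n → A) :
    (List.ofFn fun i => t i • y i).prod = (∏ i, t i) • (List.ofFn y).prod := by
  induction n with
  | zero => simp
  | succ n ih => simp [List.ofFn_succ, Fin.prod_univ_succ, ih, smul_mul_smul_comm, mul_smul]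

namespace ExteriorAlgebra

variable {R M : Type*} [CommRing R] [AddCommGroup M] [Module R M]

theorem ι_mul_ι_anticomm (x y : M) : ι R x * ι R y = -(ι R y * ι R x) :=
  eq_neg_of_add_eq_zero_left (ι_add_mul_swap x y)

theorem commute_ι_ι_mul_ι (x a b : M) : Commute (ι R x) (ι R a * ι R b) := by
  rw [Commute, SemiconjBy, ← mul_assoc, ι_mul_ι_anticomm x a, neg_mul, mul_assoc,
    ι_mul_ι_anticomm x b, mul_neg, neg_neg, mul_assoc]

theorem commute_ι_mul_ι (a b c d : M) : Commute (ι R a * ι R b) (ι R c * ι R d) :=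
  ((commute_ι_ι_mul_ι c a b).mul_left (commute_ι_ι_mul_ι d a b)).symm

theorem ι_mul_ι_mul_self (a b : M) : ι R a * ι R b * (ι R a * ι R b) = 0 := by
  rw [← mul_assoc, mul_assoc (ι R a), ι_mul_ι_anticomm b a, mul_neg, ← mul_assoc, ι_sq_zero,
    zero_mul, neg_zero, zero_mul]

theorem ι_mul_ι_mem_exteriorPower_two (a b : M) : ι R a * ι R b ∈ ⋀[R]^2 M := by
  simpa [ιMulti_apply, List.ofFn_succ] using ιMulti_range R 2 ⟨![a, b], rfl⟩

variable {n : ℕ}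

variable (R) in
def wedgePair (v : Fin (2 * n) → M) (i : Fin n) : ExteriorAlgebra R M :=
  ι R (v ⟨2 * i, by omega⟩) * ι R (v ⟨2 * i + 1, by omega⟩)

theorem prod_ofFn_wedgePair (v : Fin (2 * n) → M) :
    (List.ofFn (wedgePair R v)).prod = ιMulti R (2 * n) v := by
  rw [ιMulti_apply, List.ofFn_mul', List.prod_flatten, List.map_ofFn]
  simp [List.ofFn_succ, Function.comp_def]
  rfl

theorem sum_smul_wedgePair_pow (v : Fin (2 * n) → M) (t : Fin n → R) :
    (∑ i, t i • wedgePair R v i) ^ n = (n ! * ∏ i, t i) • ιMulti R (2 * n) v := by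
  have hcomm : ∀ i j, Commute (t i • wedgePair R v i) (t j • wedgePair R v j) := fun i j =>
    ((commute_ι_mul_ι (R := R) _ _ _ _).smul_left _).smul_right _
  have hsq : ∀ i, (t i • wedgePair R v i) * (t i • wedgePair R v i) = 0 := fun i => by
    rw [smul_mul_assoc, mul_smul_comm, wedgePair, ι_mul_ι_mul_self, smul_zero, smul_zero]
  rw [sum_pow_eq_factorial_smul_prod_of_mul_self_eq_zero hcomm hsq, List.prod_ofFn_smul,
    prod_ofFn_wedgePair, ← Nat.cast_smul_eq_nsmul R, smul_smul]

end ExteriorAlgebra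

namespace Polynomial

theorem homogenize_one_of_natDegree_le_one {R : Type*} [CommSemiring R] {g : R[X]}
    (hg : g.natDegree ≤ 1) :
    g.homogenize 1 = .C (g.coeff 1) * .X 0 + .C (g.coeff 0) * .X 1 := by
  conv_lhs => rw [eq_X_add_C_of_natDegree_le_one hg]
  simp

variable {K : Type*} [Field K] [IsAlgClosed K]

theorem exists_eq_mul_of_natDegree_le_succ {p : K[X]} {m : ℕ} (hp : p.natDegree ≤ m + 1) :
    ∃ g q : K[X], g.natDegree ≤ 1 ∧ q.natDegree ≤ m ∧ p = g * q := by
  by_cases hpm : p.natDegree ≤ m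
  · exact ⟨1, p, by simp, hpm, (one_mul p).symm⟩
  obtain ⟨r, hr⟩ := IsAlgClosed.exists_root p (natDegree_pos_iff_degree_pos.mp (by omega)).ne'
  refine ⟨X - C r, p /ₘ (X - C r), by simp, ?_, (mul_divByMonic_eq_iff_isRoot.mpr hr).symm⟩
  rw [natDegree_divByMonic p (monic_X_sub_C r), natDegree_X_sub_C]
  omega

theorem exists_homogenize_eq_prod {m : ℕ} (hm : 1 ≤ m) {p : K[X]} (hp : p.natDegree ≤ m) :
    ∃ a b : Fin m → K, p.homogenize m = ∏ i, (.C (a i) * .X 0 + .C (b i) * .X 1) := by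
  induction m, hm using Nat.le_induction generalizing p with
  | base => exact ⟨![p.coeff 1], ![p.coeff 0], by simp [homogenize_one_of_natDegree_le_one hp]⟩
  | succ m _ ih =>
    obtain ⟨g, q, hg, hq, rfl⟩ := exists_eq_mul_of_natDegree_le_succ hp
    obtain ⟨a, b, hab⟩ := ih hq
    refine ⟨Fin.cons (g.coeff 1) a, Fin.cons (g.coeff 0) b, ?_⟩
    rw [Fin.prod_univ_succ]
    simp only [Fin.cons_zero, Fin.cons_succ]
    rw [add_comm m, homogenize_mul g q hg hq, homogenize_one_of_natDegree_le_one hg, hab]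

end Polynomial

open Polynomial in
theorem exists_binary_form_eq_prod_linear {K : Type*} [Field K] [IsAlgClosed K] {m : ℕ}
    (hm : 1 ≤ m) (c : Fin (m + 1) → K) :
    ∃ a b : Fin m → K, ∀ l u : K,
      ∑ k : Fin (m + 1), c k * l ^ (k : ℕ) * u ^ (m - (k : ℕ)) = ∏ i, (a i * l + b i * u) := by
  have hp : (∑ k : Fin (m + 1), C (c k) * X ^ (k : ℕ)).natDegree ≤ m :=
    natDegree_sum_le_of_forall_le _ _ fun k _ => (natDegree_C_mul_X_pow_le _ _).trans k.is_le
  obtain ⟨a, b, hab⟩ := exists_homogenize_eq_prod hm hp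
  refine ⟨a, b, fun l u => ?_⟩
  simpa [Fin.is_le, mul_assoc] using congrArg (MvPolynomial.eval ![l, u]) hab

theorem exists_two_vectors_realizing_binary_form_general
    (m : ℕ) (hm : 1 ≤ m) (c : Fin (m + 1) → ℂ) :
    ∃ ω₁ ω₂ : ExteriorAlgebra ℂ (Fin (2 * m) → ℂ),
      ω₁ ∈ ⋀[ℂ]^2 (Fin (2 * m) → ℂ) ∧ ω₂ ∈ ⋀[ℂ]^2 (Fin (2 * m) → ℂ) ∧
      ∀ l u : ℂ,
        (l • ω₁ + u • ω₂) ^ m =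
          (∑ k : Fin (m + 1), c k * l ^ (k : ℕ) * u ^ (m - (k : ℕ))) •
            ((List.finRange (2 * m)).map
              (fun i => ExteriorAlgebra.ι ℂ (Pi.single i 1 : Fin (2 * m) → ℂ))).prod := by
  obtain ⟨a, b, hab⟩ := exists_binary_form_eq_prod_linear hm fun k => (m ! : ℂ)⁻¹ * c k
  have hf : ∀ l u : ℂ, ∑ k : Fin (m + 1), c k * l ^ (k : ℕ) * u ^ (m - (k : ℕ)) =
      m ! * ∏ i, (a i * l + b i * u) := fun l u => by
    rw [← hab, Finset.mul_sum]
    have hfact : (m ! : ℂ) ≠ 0 := Nat.cast_ne_zero.mpr m.factorial_ne_zero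
    simp only [mul_assoc, mul_inv_cancel_left₀ hfact]
  set β := ExteriorAlgebra.wedgePair ℂ fun i : Fin (2 * m) => (Pi.single i 1 : Fin (2 * m) → ℂ)
  have hβ : ∀ t : Fin m → ℂ, ∑ i, t i • β i ∈ ⋀[ℂ]^2 (Fin (2 * m) → ℂ) := fun t =>
    Submodule.sum_mem _ fun i _ =>
      Submodule.smul_mem _ _ (ExteriorAlgebra.ι_mul_ι_mem_exteriorPower_two _ _)
  refine ⟨∑ i, a i • β i, ∑ i, b i • β i, hβ a, hβ b, fun l u => ?_⟩
  calc (l • ∑ i, a i • β i + u • ∑ i, b i • β i) ^ m = (∑ i, (a i * l + b i * u) • β i) ^ m := by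
        simp only [Finset.smul_sum, smul_smul, ← Finset.sum_add_distrib, add_smul, mul_comm]
    _ = _ := by
        rw [ExteriorAlgebra.sum_smul_wedgePair_pow, ← hf, ExteriorAlgebra.ιMulti_apply,
          List.ofFn_eq_map]

/-- Let `m ≥ 1` and let `f(λ, μ) = Σ_{k=0}^m c_k λ^k μ^{m-k}` be a nonzero
homogeneous polynomial of degree `m` over ℂ. Then there are 2-vectors `ω₁, ω₂ ∈ ⋀²(ℂ^{2m})`
such that for all `λ, μ ∈ ℂ`, `(λω₁ + μω₂)^{∧m} = f(λ, μ) • (e₁ ∧ ⋯ ∧ e_{2m})` in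
`⋀^{2m}(ℂ^{2m})`, where `e₁, …, e_{2m}` is the standard basis. -/
theorem exists_two_vectors_realizing_binary_form
    (m : ℕ) (hm : 1 ≤ m) (c : Fin (m + 1) → ℂ) (hc : c ≠ 0) :
    ∃ ω₁ ω₂ : ExteriorAlgebra ℂ (Fin (2 * m) → ℂ),
      ω₁ ∈ ⋀[ℂ]^2 (Fin (2 * m) → ℂ) ∧ ω₂ ∈ ⋀[ℂ]^2 (Fin (2 * m) → ℂ) ∧
      ∀ l u : ℂ,
        (l • ω₁ + u • ω₂) ^ m =
          (∑ k : Fin (m + 1), c k * l ^ (k : ℕ) * u ^ (m - (k : ℕ))) •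
            ((List.finRange (2 * m)).map
              (fun i => ExteriorAlgebra.ι ℂ (Pi.single i 1 : Fin (2 * m) → ℂ))).prod :=
  exists_two_vectors_realizing_binary_form_general m hm c
end
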